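/- Let G be a finite simple graph with no isolated vertices and m ≥ 2 edges, let 0 < α ≤ 1/3 and ε ≥ 0, and let (p, r) be the state after any run of pushes starting from (p₀, r₀) with p₀ = 0, r₀ = p° ≥ 0 and ∑_v p°(v) = 1. Suppose that r(v)/d(v) ≤ ε for every vertex v, that 0 ≤ τ < t₀ with vol(V^p_{<t₀}) ≤ m, and that there exists a vertex u with p(u)/d(u) < τ. Then there exists t ∈ [τ, t₀) such that Φ(V^p_{<t}) ≤ sqrt( 12·(t₀ + ε)·α·log₂ m / (t₀ − τ) ). -/

import Mathlib

open scoped Classical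
open Finset

noncomputable section

variable {V : Type*} [Fintype V]

/-- The push operation at vertex `u` on a state `(p, r)` of settled and residual mass:
a fraction `α` of the residual mass at `u` settles at `u`, half of the rest is spread
evenly to the neighbors of `u`, and half stays at `u`. -/
def push (G : SimpleGraph V) (α : ℝ) (u : V) (s : (V → ℝ) × (V → ℝ)) :
    (V → ℝ) × (V → ℝ) :=
  (fun w => if w = u then s.1 u + α * s.2 u else s.1 w,
   fun w =>
     if w = u then (1 - α) * s.2 u / 2
     else if G.Adj u w then s.2 w + (1 - α) * s.2 u / (2 * (G.degree u : ℝ))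
     else s.2 w)

/-- The state obtained from `init` by successively pushing at the vertices of the list `us`. -/
def runState (G : SimpleGraph V) (α : ℝ) (init : (V → ℝ) × (V → ℝ)) (us : List V) :
    (V → ℝ) × (V → ℝ) :=
  us.foldl (fun s u => push G α u s) init

/-- The net flow over the ordered pair `(u, v)` during the run of pushes at the vertices of
`us` started at state `s`: the sum over pushes at `u` of the mass sent along `(u,v)` minus
the sum over pushes at `v` of the mass sent along `(v,u)`. -/
def netFlow (G : SimpleGraph V) (α : ℝ) (u v : V) :
    (V → ℝ) × (V → ℝ) → List V → ℝ
  | _, [] => 0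
  | s, w :: ws =>
      ((if w = u then (1 - α) * s.2 u / (2 * (G.degree u : ℝ)) else 0) -
        (if w = v then (1 - α) * s.2 v / (2 * (G.degree v : ℝ)) else 0)) +
      netFlow G α u v (push G α w s) ws

/-- The set of edges of `G` with exactly one endpoint in `S`. -/
def bdry (G : SimpleGraph V) (S : Finset V) : Finset (Sym2 V) :=
  G.edgeFinset.filter fun e => ∃ u v, u ∈ S ∧ v ∉ S ∧ e = s(u, v)

/-- The volume of `S`: the sum of the degrees of the vertices of `S`. -/
def vol (G : SimpleGraph V) (S : Finset V) : ℕ := ∑ v ∈ S, G.degree v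

/-- The conductance `Φ(S) = |∂S| / min(vol S, 2m − vol S)`. -/
def conduct (G : SimpleGraph V) (S : Finset V) : ℝ :=
  ((bdry G S).card : ℝ) /
    ((min (vol G S) (2 * G.edgeFinset.card - vol G S) : ℕ) : ℝ)

/-- The set of vertices of density at least `t` with respect to the mass distribution `p`. -/
def Vge (G : SimpleGraph V) (p : V → ℝ) (t : ℝ) : Finset V :=
  Finset.univ.filter fun v => t ≤ p v / (G.degree v : ℝ)

/-- The set of vertices of density greater than `t` with respect to the mass distribution `p`. -/
def Vgt (G : SimpleGraph V) (p : V → ℝ) (t : ℝ) : Finset V :=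
  Finset.univ.filter fun v => t < p v / (G.degree v : ℝ)

/-- The set of vertices of density less than `t` with respect to the mass distribution `p`. -/
def Vlt (G : SimpleGraph V) (p : V → ℝ) (t : ℝ) : Finset V :=
  Finset.univ.filter fun v => p v / (G.degree v : ℝ) < t

/-!
A run of pushes conserves mass and keeps `p = α (p₀ - r) + (1 - α) W p` for the lazy walk `W`:
`p` is the PageRank vector of `p₀ - r`. Summed over the complement of a level set
`S_y = V^p_{<y}`, this bounds the density drop `∑ (p(a)/d(a) - p(b)/d(b))` over the ordered edges
`(a, b)` entering `S_y` by `3α(y + ε) vol(S_y)`. If every `S_t` with `τ ≤ t < t₀` had conductance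
above `φ`, integrating the cut size over the levels `y ∈ [s, s']` and applying Cauchy–Schwarz
would give `φ² vol(S_s)² (s' - s) < 3α(t₀ + ε) vol(S_{s'})²`. For the `φ` of the theorem, chaining
this over `⌈log₂ m⌉` equal steps of `[τ, t₀]` makes `vol(S_{t₀})` exceed `m`.
-/

lemma Finset.sum_sub_swap_eq_zero {ι : Type*} (T : Finset (ι × ι))
    (hT : ∀ e ∈ T, e.swap ∈ T) (f : ι → ℝ) : ∑ e ∈ T, (f e.1 - f e.2) = 0 :=
  sum_involution (fun e _ => e.swap) (fun _ _ => by simp only [Prod.fst_swap, Prod.snd_swap]; ring)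
    (fun e _ hf h => hf (by rw [show e.2 = e.1 from congrArg Prod.fst h, sub_self])) hT
    (fun _ _ => rfl)

open MeasureTheory

lemma intervalIntegrable_indicator_Ioc_const (a b c s s' : ℝ) :
    IntervalIntegrable ((Set.Ioc a b).indicator fun _ => c) volume s s' :=
  ((integrable_indicator_iff measurableSet_Ioc).2
    (integrableOn_const measure_Ioc_lt_top.ne)).intervalIntegrable

lemma integral_indicator_Ioc_const {a b c s s' : ℝ} (h : s ≤ s') :
    ∫ y in s..s', (Set.Ioc a b).indicator (fun _ => c) y = max (min b s' - max a s) 0 * c := by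
  rw [intervalIntegral.integral_of_le h, integral_indicator measurableSet_Ioc,
    Measure.restrict_restrict measurableSet_Ioc, setIntegral_const, Set.Ioc_inter_Ioc,
    Real.volume_real_Ioc, smul_eq_mul]

lemma sq_max_min_sub_max_le (a b s s' : ℝ) :
    max (min b s' - max a s) 0 ^ 2 ≤ max (min b s' - max a s) 0 * (b - a) := by
  rcases le_total (min b s' - max a s) 0 with h | h
  · simp [max_eq_right h]
  · rw [max_eq_left h, sq]
    exact mul_le_mul_of_nonneg_left (by linarith [min_le_left b s', le_max_left a s]) h

namespace Finset

variable {ι : Type*} (P : Finset ι) (a b : ι → ℝ)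

lemma sum_filter_mem_Ioc_eq (c : ι → ℝ) (y : ℝ) :
    ∑ e ∈ P.filter (fun e => y ∈ Set.Ioc (a e) (b e)), c e =
      ∑ e ∈ P, (Set.Ioc (a e) (b e)).indicator (fun _ => c e) y := by
  simp only [Set.indicator_apply, sum_filter]

lemma intervalIntegrable_sum_filter_mem_Ioc (c : ι → ℝ) (s s' : ℝ) :
    IntervalIntegrable (fun y => ∑ e ∈ P.filter (fun e => y ∈ Set.Ioc (a e) (b e)), c e)
      volume s s' := by
  simp_rw [sum_filter_mem_Ioc_eq]
  simpa only [← Finset.sum_apply] using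
    IntervalIntegrable.sum _ fun e _ => intervalIntegrable_indicator_Ioc_const _ _ _ _ _

lemma integral_sum_filter_mem_Ioc (c : ι → ℝ) {s s' : ℝ} (h : s ≤ s') :
    ∫ y in s..s', ∑ e ∈ P.filter (fun e => y ∈ Set.Ioc (a e) (b e)), c e =
      ∑ e ∈ P, max (min (b e) s' - max (a e) s) 0 * c e := by
  simp_rw [sum_filter_mem_Ioc_eq]
  rw [intervalIntegral.integral_finsetSum fun e _ =>
    intervalIntegrable_indicator_Ioc_const _ _ _ _ _]
  simp_rw [integral_indicator_Ioc_const h]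

/-- Integrate over `y ∈ [s, s']` the number of intervals `(a e, b e]` containing `y`, and bound the
integral by Cauchy–Schwarz on the overlap lengths, which vanish unless `a e < s'`. -/
lemma sq_mul_le_card_mul_of_le_card_filter_mem_Ioc {s s' k C : ℝ} (hss : s < s')
    (hk : ∀ y ∈ Set.Ioo s s', k ≤ #(P.filter fun e => y ∈ Set.Ioc (a e) (b e)))
    (hC : ∀ y ∈ Set.Icc s s', ∑ e ∈ P.filter (fun e => y ∈ Set.Ioc (a e) (b e)), (b e - a e) ≤ C)
    (hk0 : 0 ≤ k) :
    k ^ 2 * (s' - s) ≤ #(P.filter fun e => a e < s') * C := by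
  set len : ι → ℝ := fun e => max (min (b e) s' - max (a e) s) 0
  set χ : ι → ℝ := fun e => if a e < s' then 1 else 0
  have hlow : k * (s' - s) ≤ ∑ e ∈ P, len e := by
    calc k * (s' - s) = ∫ _ in s..s', k := by simp [mul_comm]
      _ ≤ ∫ y in s..s', ∑ e ∈ P.filter (fun e => y ∈ Set.Ioc (a e) (b e)), (1 : ℝ) :=
        intervalIntegral.integral_mono_on_of_le_Ioo hss.le intervalIntegrable_const
          (P.intervalIntegrable_sum_filter_mem_Ioc a b _ s s') fun y hy => by simpa using hk y hy
      _ = ∑ e ∈ P, len e := by rw [P.integral_sum_filter_mem_Ioc a b _ hss.le]; simp [len]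
  have hup : ∑ e ∈ P, len e * (b e - a e) ≤ C * (s' - s) := by
    calc ∑ e ∈ P, len e * (b e - a e)
        = ∫ y in s..s', ∑ e ∈ P.filter (fun e => y ∈ Set.Ioc (a e) (b e)), (b e - a e) :=
          (P.integral_sum_filter_mem_Ioc a b _ hss.le).symm
      _ ≤ ∫ _ in s..s', C :=
        intervalIntegral.integral_mono_on hss.le (P.intervalIntegrable_sum_filter_mem_Ioc a b _ s s')
          intervalIntegrable_const hC
      _ = C * (s' - s) := by simp [mul_comm]
  have hχ : ∀ e, χ e * len e = len e := fun e => by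
    by_cases h : a e < s'
    · simp [χ, h]
    · simp only [χ, h, if_false, zero_mul, len]
      exact (max_eq_right (by linarith [min_le_right (b e) s', le_max_left (a e) s])).symm
  have hCS : (∑ e ∈ P, len e) ^ 2 ≤ #(P.filter fun e => a e < s') * ∑ e ∈ P, len e * (b e - a e) :=
    calc (∑ e ∈ P, len e) ^ 2 = (∑ e ∈ P, χ e * len e) ^ 2 := by simp only [hχ]
      _ ≤ (∑ e ∈ P, χ e ^ 2) * ∑ e ∈ P, len e ^ 2 := sum_mul_sq_le_sq_mul_sq _ _ _
      _ ≤ _ := by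
        gcongr with e
        · simp [χ, sum_boole]
        · exact sq_max_min_sub_max_le _ _ _ _
  have hΔ : 0 < s' - s := sub_pos.2 hss
  refine le_of_mul_le_mul_right ?_ hΔ
  calc k ^ 2 * (s' - s) * (s' - s) = (k * (s' - s)) ^ 2 := by ring
    _ ≤ (∑ e ∈ P, len e) ^ 2 := by gcongr
    _ ≤ #(P.filter fun e => a e < s') * (C * (s' - s)) :=
      hCS.trans (mul_le_mul_of_nonneg_left hup (Nat.cast_nonneg _))
    _ = _ := by ring

end Finset

lemma two_rpow_two_mul_le {x : ℝ} (h1 : 1 / 2 ≤ x) (h2 : x ≤ 1) : (2 : ℝ) ^ (2 * x) ≤ 4 * x := by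
  have h := rpow_one_add_le_one_add_mul_self (s := 1) (by norm_num)
    (p := 2 * x - 1) (by linarith) (by linarith)
  rw [show 2 * x = 1 + (2 * x - 1) by ring, Real.rpow_add two_pos, Real.rpow_one]
  norm_num at h ⊢
  linarith

lemma sq_two_rpow_le_pow_ceil {L : ℝ} (hL : 1 ≤ L) :
    ((2 : ℝ) ^ L) ^ 2 ≤ (4 * L / ⌈L⌉₊) ^ ⌈L⌉₊ := by
  set n := ⌈L⌉₊
  have hn : (0 : ℝ) < n := by exact_mod_cast Nat.ceil_pos.2 (by linarith)
  have hLn : L ≤ n := Nat.le_ceil L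
  have hnL : (n : ℝ) < L + 1 := Nat.ceil_lt_add_one (by linarith)
  calc ((2 : ℝ) ^ L) ^ 2 = ((2 : ℝ) ^ (2 * (L / n))) ^ n := by
        rw [← Real.rpow_natCast, ← Real.rpow_natCast, ← Real.rpow_mul two_pos.le,
          ← Real.rpow_mul two_pos.le]
        congr 1
        push_cast
        field_simp
    _ ≤ (4 * (L / n)) ^ n := by
        gcongr
        exact two_rpow_two_mul_le (by rw [le_div_iff₀ hn]; linarith) (div_le_one_of_le₀ hLn hn.le)
    _ = (4 * L / n) ^ n := by ring

/-- Cut `[τ, t₀]` into `⌈L⌉` equal steps; across each one `f ^ 2` grows by the factor `4L/⌈L⌉`. -/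
lemma sq_two_rpow_lt_sq_of_growth {f : ℝ → ℝ} {τ t0 L : ℝ} (hτ : τ < t0) (hL : 1 ≤ L)
    (h0 : 1 ≤ f τ)
    (hstep : ∀ s s', τ ≤ s → s < s' → s' ≤ t0 → 4 * L / (t0 - τ) * (s' - s) * f s ^ 2 < f s' ^ 2) :
    ((2 : ℝ) ^ L) ^ 2 < f t0 ^ 2 := by
  set n := ⌈L⌉₊
  have hn : 0 < n := Nat.ceil_pos.2 (by linarith)
  have hnR : (0 : ℝ) < n := by exact_mod_cast hn
  set h := (t0 - τ) / n
  have hh : 0 < h := div_pos (by linarith) hnR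
  have hnh : n * h = t0 - τ := mul_div_cancel₀ _ hnR.ne'
  have hgeom := geom_lt (u := fun k : ℕ => f (τ + k * h) ^ 2) (c := 4 * L / n) (by positivity) hn
    fun k hk => by
      have hkn : ((k + 1 : ℕ) : ℝ) ≤ n := by exact_mod_cast hk
      have := hstep (τ + k * h) (τ + (k + 1 : ℕ) * h)
        (le_add_of_nonneg_right (by positivity)) (by push_cast; linarith) (by nlinarith)
      convert this using 2
      rw [← hnh]
      field_simp
      push_cast
      ring
  simp only [Nat.cast_zero, zero_mul, add_zero, hnh, add_sub_cancel] at hgeom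
  calc ((2 : ℝ) ^ L) ^ 2 ≤ (4 * L / n) ^ n := sq_two_rpow_le_pow_ceil hL
    _ ≤ (4 * L / n) ^ n * f τ ^ 2 := le_mul_of_one_le_right (by positivity) (one_le_pow₀ h0)
    _ < f t0 ^ 2 := hgeom

namespace SimpleGraph

variable {G : SimpleGraph V} {α : ℝ} {p0 p r : V → ℝ}

variable (G) in
def lazyWalk : (V → ℝ) →ₗ[ℝ] V → ℝ where
  toFun f v := (f v + ∑ w ∈ G.neighborFinset v, f w / G.degree w) / 2
  map_add' f g := by ext v; simp only [Pi.add_apply, add_div, sum_add_distrib]; ring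
  map_smul' c f := by
    ext v
    simp only [Pi.smul_apply, smul_eq_mul, mul_div_assoc, ← mul_sum, RingHom.id_apply]
    ring

lemma lazyWalk_apply (f : V → ℝ) (v : V) :
    G.lazyWalk f v = (f v + ∑ w ∈ G.neighborFinset v, f w / G.degree w) / 2 := rfl

variable (G) in
def cutPairs (S : Finset V) : Finset (V × V) :=
  univ.filter fun e => G.Adj e.1 e.2 ∧ e.1 ∉ S ∧ e.2 ∈ S

lemma sum_compl_sum_neighborFinset_sub (S : Finset V) (f : V → ℝ) :
    ∑ v ∈ Sᶜ, ∑ w ∈ G.neighborFinset v, (f v - f w) =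
      ∑ e ∈ G.cutPairs S, (f e.1 - f e.2) := by
  have hpairs : ∑ v ∈ Sᶜ, ∑ w ∈ G.neighborFinset v, (f v - f w) =
      ∑ e ∈ univ.filter (fun e : V × V => G.Adj e.1 e.2 ∧ e.1 ∉ S), (f e.1 - f e.2) :=
    (sum_finset_product (f := fun e : V × V => f e.1 - f e.2) _ Sᶜ (G.neighborFinset ·)
      fun e => by simp [and_comm]).symm
  have hinside : ∑ e ∈ univ.filter (fun e : V × V => G.Adj e.1 e.2 ∧ e.1 ∉ S ∧ e.2 ∉ S),
      (f e.1 - f e.2) = 0 :=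
    sum_sub_swap_eq_zero _ (fun e he => by
      simp only [mem_filter, mem_univ, true_and, Prod.fst_swap, Prod.snd_swap] at he ⊢
      exact ⟨he.1.symm, he.2.2, he.2.1⟩) f
  rw [hpairs, ← sum_filter_add_sum_filter_not _ (fun e : V × V => e.2 ∉ S), filter_filter,
    filter_filter]
  simp only [and_assoc, hinside, zero_add, not_not, cutPairs]

lemma sum_sum_neighborFinset_div_degree (hd : ∀ v, 0 < G.degree v) (f : V → ℝ) :
    ∑ v, ∑ w ∈ G.neighborFinset v, f w / G.degree w = ∑ v, f v := by
  have h := sum_compl_sum_neighborFinset_sub (G := G) ∅ fun v => f v / G.degree v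
  simp only [compl_empty, cutPairs, notMem_empty, and_false, filter_false, sum_empty,
    sum_sub_distrib, sum_const, card_neighborFinset_eq_degree, nsmul_eq_mul] at h
  rw [sub_zero, sub_eq_zero] at h
  rw [← h]
  exact sum_congr rfl fun v _ => mul_div_cancel₀ _ (by exact_mod_cast (hd v).ne')

lemma lazyWalk_single (u v : V) :
    G.lazyWalk (Pi.single u 1) v =
      ((if v = u then 1 else 0) + if G.Adj u v then 1 / (G.degree u : ℝ) else 0) / 2 := by
  simp [lazyWalk_apply, Pi.single_apply, ite_div, sum_ite_eq', adj_comm]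

lemma push_eq (α : ℝ) (u : V) (s : (V → ℝ) × (V → ℝ)) :
    push G α u s = (s.1 + Pi.single u (α * s.2 u),
      s.2 + s.2 u • ((1 - α) • G.lazyWalk (Pi.single u 1) - Pi.single u 1)) := by
  ext v
  · by_cases hv : v = u <;> simp [push, hv]
  · by_cases hv : v = u
    · subst hv
      simp only [push, ↓reduceIte, Pi.add_apply, Pi.smul_apply, Pi.sub_apply, lazyWalk_single,
        G.irrefl, Pi.single_eq_same, smul_eq_mul]
      ring
    · by_cases ha : G.Adj u v
      · simp only [push, hv, ha, ↓reduceIte, Pi.add_apply, Pi.smul_apply, Pi.sub_apply,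
          lazyWalk_single, Pi.single_eq_of_ne hv, smul_eq_mul]
        ring
      · simp [push, lazyWalk_single, hv, ha]

variable (G α p0) in
structure PushInvariant (s : (V → ℝ) × (V → ℝ)) : Prop where
  sum_eq : ∑ v, (s.1 v + s.2 v) = ∑ v, p0 v
  fst_eq : s.1 = α • (p0 - s.2) + (1 - α) • G.lazyWalk s.1

lemma pushInvariant_init : PushInvariant G α p0 (0, p0) :=
  ⟨by simp, by simp⟩

lemma PushInvariant.push (hd : ∀ v, 0 < G.degree v) {s : (V → ℝ) × (V → ℝ)}
    (hs : PushInvariant G α p0 s) (u : V) : PushInvariant G α p0 (push G α u s) := by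
  have hW : ∑ v, G.lazyWalk (Pi.single u 1) v = 1 := by
    simp only [lazyWalk_apply, ← sum_div, sum_add_distrib, sum_sum_neighborFinset_div_degree hd,
      sum_pi_single', mem_univ, ↓reduceIte, add_self_div_two]
  rw [push_eq]
  constructor
  · simp only [Pi.add_apply, Pi.smul_apply, Pi.sub_apply, smul_eq_mul]
    rw [← hs.sum_eq]
    simp only [sum_add_distrib, ← mul_sum, sum_sub_distrib, hW, sum_pi_single', mem_univ,
      ↓reduceIte]
    ring
  · have hsingle : Pi.single u (α * s.2 u) = (α * s.2 u) • (Pi.single u 1 : V → ℝ) := by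
      rw [← Pi.single_smul, smul_eq_mul, mul_one]
    simp only [hsingle, map_add, map_smul]
    nth_rewrite 1 [hs.fst_eq]
    module

lemma PushInvariant.runState (hd : ∀ v, 0 < G.degree v) {s : (V → ℝ) × (V → ℝ)}
    (hs : PushInvariant G α p0 s) (us : List V) :
    PushInvariant G α p0 (runState G α s us) := by
  induction us generalizing s with
  | nil => exact hs
  | cons u us ih => exact ih (hs.push hd u)

lemma PushInvariant.cutPairs_sum_eq (hd : ∀ v, 0 < G.degree v)
    (hs : PushInvariant G α p0 (p, r)) (S : Finset V) :
    (1 - α) / 2 * ∑ e ∈ G.cutPairs S, (p e.1 / G.degree e.1 - p e.2 / G.degree e.2) =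
      α * ∑ v ∈ Sᶜ, (p0 v - r v - p v) := by
  rw [← sum_compl_sum_neighborFinset_sub S fun v => p v / G.degree v, mul_sum, mul_sum]
  refine sum_congr rfl fun v _ => ?_
  have hv := congrFun hs.fst_eq v
  simp only [Pi.add_apply, Pi.smul_apply, Pi.sub_apply, smul_eq_mul, lazyWalk_apply] at hv
  rw [sum_sub_distrib, sum_const, card_neighborFinset_eq_degree, nsmul_eq_mul,
    mul_div_cancel₀ _ (by exact_mod_cast (hd v).ne')]
  linarith

lemma sum_add_le_mul_vol_Vlt (hd : ∀ v, 0 < G.degree v) {ε : ℝ}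
    (hr : ∀ v, r v / G.degree v ≤ ε) (y : ℝ) :
    ∑ v ∈ Vlt G p y, (p v + r v) ≤ (y + ε) * vol G (Vlt G p y) := by
  rw [vol, Nat.cast_sum, mul_sum]
  refine sum_le_sum fun v hv => ?_
  have hdv : (0 : ℝ) < G.degree v := by exact_mod_cast hd v
  have hpv : p v / G.degree v < y := (mem_filter.1 hv).2
  rw [div_lt_iff₀ hdv] at hpv
  have hrv := (div_le_iff₀ hdv).1 (hr v)
  linarith

lemma PushInvariant.cutPairs_sum_Vlt_le (hd : ∀ v, 0 < G.degree v)
    (hs : PushInvariant G α p0 (p, r)) (hp0 : ∀ v, 0 ≤ p0 v) (hα0 : 0 ≤ α) (hα : α ≤ 1 / 3)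
    {ε : ℝ} (hr : ∀ v, r v / G.degree v ≤ ε) (y : ℝ) :
    ∑ e ∈ G.cutPairs (Vlt G p y), (p e.1 / G.degree e.1 - p e.2 / G.degree e.2) ≤
      3 * α * (y + ε) * vol G (Vlt G p y) := by
  set S := Vlt G p y
  set D := ∑ e ∈ G.cutPairs S, (p e.1 / G.degree e.1 - p e.2 / G.degree e.2)
  have hD : 0 ≤ D := sum_nonneg fun e he => by
    simp only [cutPairs, S, Vlt, mem_filter, mem_univ, true_and, not_lt] at he
    linarith [he.2.1, he.2.2]
  have hX : ∑ v ∈ Sᶜ, (p0 v - r v - p v) ≤ ∑ v ∈ S, (p v + r v) := by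
    have hp0S : ∑ v ∈ Sᶜ, p0 v ≤ ∑ v, p0 v := sum_le_univ_sum_of_nonneg hp0
    rw [← hs.sum_eq, ← sum_add_sum_compl S] at hp0S
    simp only [sum_sub_distrib, sum_add_distrib] at hp0S ⊢
    linarith
  calc D ≤ 3 * ((1 - α) / 2 * D) := by nlinarith
    _ = 3 * α * ∑ v ∈ Sᶜ, (p0 v - r v - p v) := by rw [hs.cutPairs_sum_eq hd]; ring
    _ ≤ 3 * α * ((y + ε) * vol G S) := by
      gcongr
      exact hX.trans (sum_add_le_mul_vol_Vlt hd hr y)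
    _ = _ := by ring

lemma card_bdry_eq_card_cutPairs (S : Finset V) : #(bdry G S) = #(G.cutPairs S) := by
  symm
  apply card_bij (fun e _ => s(e.1, e.2))
  · intro e he
    simp only [cutPairs, mem_filter, mem_univ, true_and] at he
    simp only [bdry, mem_filter, mem_edgeFinset, mem_edgeSet]
    exact ⟨he.1, e.2, e.1, he.2.2, he.2.1, Sym2.eq_swap⟩
  · intro e he e' he' h
    simp only [cutPairs, mem_filter, mem_univ, true_and] at he he'
    rcases Sym2.eq_iff.1 h with ⟨h1, h2⟩ | ⟨h1, -⟩
    · exact Prod.ext h1 h2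
    · exact absurd he'.2.2 (h1 ▸ he.2.1)
  · intro e he
    simp only [bdry, mem_filter, mem_edgeFinset] at he
    obtain ⟨hE, u, v, hu, hv, rfl⟩ := he
    exact ⟨(v, u), by simp [cutPairs, G.adj_symm hE, hu, hv], Sym2.eq_swap⟩

lemma mul_vol_lt_card_cutPairs_of_lt_conduct {S : Finset V} {φ : ℝ} (hS : 0 < vol G S)
    (hm : vol G S ≤ #G.edgeFinset) (h : φ < conduct G S) : φ * vol G S < #(G.cutPairs S) := by
  rwa [conduct, card_bdry_eq_card_cutPairs, min_eq_left (by omega),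
    lt_div_iff₀ (by exact_mod_cast hS)] at h

lemma card_filter_adj_snd_mem (S : Finset V) :
    #(univ.filter fun e : V × V => G.Adj e.1 e.2 ∧ e.2 ∈ S) = vol G S := by
  rw [card_eq_sum_ones, sum_finset_product_right _ S (fun v => G.neighborFinset v)
    fun e => by simp [adj_comm, and_comm]]
  simp [vol]

lemma vol_Vlt_mono : Monotone fun t => vol G (Vlt G p t) := fun _ _ h =>
  sum_le_sum_of_subset fun v hv => by
    simp only [Vlt, mem_filter, mem_univ, true_and] at hv ⊢; linarith

lemma cutPairs_Vlt_eq_filter (y : ℝ) :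
    G.cutPairs (Vlt G p y) = (univ.filter fun e : V × V => G.Adj e.1 e.2).filter
      fun e => y ∈ Set.Ioc (p e.2 / G.degree e.2) (p e.1 / G.degree e.1) := by
  ext e
  simp only [cutPairs, Vlt, mem_filter, mem_univ, true_and, not_lt, Set.mem_Ioc]
  tauto

lemma card_filter_lt_eq_vol_Vlt (t : ℝ) :
    #((univ.filter fun e : V × V => G.Adj e.1 e.2).filter fun e => p e.2 / G.degree e.2 < t) =
      vol G (Vlt G p t) := by
  rw [← card_filter_adj_snd_mem, filter_filter]
  simp [Vlt]

lemma sq_mul_sq_vol_Vlt_mul_lt {φ c s s' : ℝ} (hφ : 0 ≤ φ) (hc : 0 ≤ c) (hss : s < s')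
    (hcut : ∀ x ∈ Set.Ico s s', φ * vol G (Vlt G p x) < #(G.cutPairs (Vlt G p x)))
    (hD : ∀ y ∈ Set.Icc s s', ∑ e ∈ G.cutPairs (Vlt G p y),
      (p e.1 / G.degree e.1 - p e.2 / G.degree e.2) ≤ c * vol G (Vlt G p y)) :
    φ ^ 2 * (vol G (Vlt G p s) : ℝ) ^ 2 * (s' - s) < c * (vol G (Vlt G p s') : ℝ) ^ 2 := by
  set W : ℝ := (vol G (Vlt G p s) : ℝ)
  set W' : ℝ := (vol G (Vlt G p s') : ℝ)
  -- cut sizes are integers, so `φ * W < #cut` improves to `k ≤ #cut` with `φ * W < k`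
  set k : ℝ := ((⌊φ * W⌋₊ + 1 : ℕ) : ℝ)
  have hφW : φ * W < k := by simpa [k] using Nat.lt_floor_add_one (φ * W)
  have hk : ∀ y ∈ Set.Ioo s s', k ≤ #(G.cutPairs (Vlt G p y)) := fun y hy => by
    have hW : φ * W ≤ φ * vol G (Vlt G p y) := by
      gcongr; exact Nat.cast_le.2 (vol_Vlt_mono hy.1.le)
    exact Nat.cast_le.2 ((Nat.floor_lt (by positivity)).2 (hW.trans_lt (hcut y ⟨hy.1.le, hy.2⟩)))
  have hC : ∀ y ∈ Set.Icc s s', ∑ e ∈ G.cutPairs (Vlt G p y),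
      (p e.1 / G.degree e.1 - p e.2 / G.degree e.2) ≤ c * W' := fun y hy =>
    (hD y hy).trans (by gcongr; exact Nat.cast_le.2 (vol_Vlt_mono hy.2))
  simp only [cutPairs_Vlt_eq_filter] at hk hC
  have hLS := Finset.sq_mul_le_card_mul_of_le_card_filter_mem_Ioc _ _ _ hss hk hC
    (hφW.le.trans' (by positivity))
  rw [card_filter_lt_eq_vol_Vlt] at hLS
  calc φ ^ 2 * W ^ 2 * (s' - s) = (φ * W) ^ 2 * (s' - s) := by ring
    _ < k ^ 2 * (s' - s) := by gcongr
    _ ≤ W' * (c * W') := hLS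
    _ = c * W' ^ 2 := by ring

lemma vol_pos_of_mem (hd : ∀ v, 0 < G.degree v) {S : Finset V} {u : V} (hu : u ∈ S) :
    0 < vol G S :=
  (hd u).trans_le (single_le_sum (fun v _ => Nat.zero_le (G.degree v)) hu)

lemma sq_two_rpow_lt_sq_vol_Vlt {c L τ t0 : ℝ} (hc : 0 < c) (hL : 1 ≤ L) (hτ : τ < t0)
    (h0 : 0 < vol G (Vlt G p τ))
    (hcut : ∀ x ∈ Set.Ico τ t0,
      √(4 * c * L / (t0 - τ)) * vol G (Vlt G p x) < #(G.cutPairs (Vlt G p x)))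
    (hD : ∀ y ∈ Set.Icc τ t0, ∑ e ∈ G.cutPairs (Vlt G p y),
      (p e.1 / G.degree e.1 - p e.2 / G.degree e.2) ≤ c * vol G (Vlt G p y)) :
    ((2 : ℝ) ^ L) ^ 2 < (vol G (Vlt G p t0) : ℝ) ^ 2 := by
  refine sq_two_rpow_lt_sq_of_growth (f := fun t => (vol G (Vlt G p t) : ℝ)) hτ hL
    (Nat.one_le_cast.2 h0) fun s s' hs hss hs' => ?_
  have h := sq_mul_sq_vol_Vlt_mul_lt (Real.sqrt_nonneg _) hc.le hss
    (fun x hx => hcut x ⟨hs.trans hx.1, hx.2.trans_le hs'⟩)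
    (fun y hy => hD y ⟨hs.trans hy.1, hy.2.trans hs'⟩)
  rw [Real.sq_sqrt (by have := sub_pos.2 hτ; positivity)] at h
  exact lt_of_mul_lt_mul_left (lt_of_eq_of_lt (by ring) h) hc.le

end SimpleGraph

open SimpleGraph

theorem stmt13_general {V : Type*} [Fintype V] (G : SimpleGraph V)
    (m : ℕ) (hm : m = G.edgeFinset.card) (hm2 : 2 ≤ m)
    (hd : ∀ v : V, 0 < G.degree v)
    (α : ℝ) (hα0 : 0 < α) (hα : α ≤ 1 / 3)
    (ε : ℝ) (hε : 0 ≤ ε)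
    (p0 : V → ℝ) (hp0 : ∀ v, 0 ≤ p0 v)
    (us : List V)
    (p r : V → ℝ)
    (hp : p = (runState G α ((fun _ => 0), p0) us).1)
    (hr : r = (runState G α ((fun _ => 0), p0) us).2)
    (hrε : ∀ v : V, r v / (G.degree v : ℝ) ≤ ε)
    (τ t0 : ℝ) (hτ0 : 0 ≤ τ) (hτt : τ < t0)
    (hvol : vol G (Vlt G p t0) ≤ m)
    (hu : ∃ u : V, p u / (G.degree u : ℝ) < τ) :
    ∃ t : ℝ, τ ≤ t ∧ t < t0 ∧
      conduct G (Vlt G p t) ≤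
        Real.sqrt (12 * (t0 + ε) * α * Real.logb 2 (m : ℝ) / (t0 - τ)) := by
  obtain ⟨u, hu⟩ := hu
  have hs : PushInvariant G α p0 (p, r) := by
    rw [hp, hr]; exact pushInvariant_init.runState hd us
  have hL : 1 ≤ Real.logb 2 m := by
    rw [Real.le_logb_iff_rpow_le one_lt_two (by positivity)]; exact_mod_cast hm2
  have hvol_pos : ∀ x, τ ≤ x → 0 < vol G (Vlt G p x) := fun x hx =>
    vol_pos_of_mem hd (u := u) (by simp only [Vlt, mem_filter, mem_univ, true_and]; linarith)
  by_contra! hcon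
  have hcut : ∀ x ∈ Set.Ico τ t0, √(4 * (3 * α * (t0 + ε)) * Real.logb 2 m / (t0 - τ)) *
      vol G (Vlt G p x) < #(G.cutPairs (Vlt G p x)) := fun x hx =>
    mul_vol_lt_card_cutPairs_of_lt_conduct (hvol_pos x hx.1)
      (hm ▸ (vol_Vlt_mono hx.2.le).trans hvol)
      (by rw [show 4 * (3 * α * (t0 + ε)) = 12 * (t0 + ε) * α by ring]; exact hcon x hx.1 hx.2)
  have hD : ∀ y ∈ Set.Icc τ t0, ∑ e ∈ G.cutPairs (Vlt G p y),
      (p e.1 / G.degree e.1 - p e.2 / G.degree e.2) ≤ 3 * α * (t0 + ε) * vol G (Vlt G p y) :=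
    fun y hy => (hs.cutPairs_sum_Vlt_le hd hp0 hα0.le hα hrε y).trans (by gcongr; exact hy.2)
  have hgrowth := sq_two_rpow_lt_sq_vol_Vlt
    (by have := hτ0.trans_lt hτt; positivity) hL hτt (hvol_pos τ le_rfl) hcut hD
  rw [Real.rpow_logb two_pos (by norm_num) (by positivity)] at hgrowth
  exact hgrowth.not_ge (pow_le_pow_left₀ (Nat.cast_nonneg _) (by exact_mod_cast hvol) 2)

theorem stmt13 {V : Type*} [Fintype V] (G : SimpleGraph V)
    (m : ℕ) (hm : m = G.edgeFinset.card) (hm2 : 2 ≤ m)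
    (hd : ∀ v : V, 0 < G.degree v)
    (α : ℝ) (hα0 : 0 < α) (hα : α ≤ 1 / 3)
    (ε : ℝ) (hε : 0 ≤ ε)
    (p0 : V → ℝ) (hp0 : ∀ v, 0 ≤ p0 v) (hsum : ∑ v, p0 v = 1)
    (us : List V)
    (p r : V → ℝ)
    (hp : p = (runState G α ((fun _ => 0), p0) us).1)
    (hr : r = (runState G α ((fun _ => 0), p0) us).2)
    (hrε : ∀ v : V, r v / (G.degree v : ℝ) ≤ ε)
    (τ t0 : ℝ) (hτ0 : 0 ≤ τ) (hτt : τ < t0)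
    (hvol : vol G (Vlt G p t0) ≤ m)
    (hu : ∃ u : V, p u / (G.degree u : ℝ) < τ) :
    ∃ t : ℝ, τ ≤ t ∧ t < t0 ∧
      conduct G (Vlt G p t) ≤
        Real.sqrt (12 * (t0 + ε) * α * Real.logb 2 (m : ℝ) / (t0 - τ)) :=
  stmt13_general G m hm hm2 hd α hα0 hα ε hε p0 hp0 us p r hp hr hrε τ t0 hτ0 hτt hvol hu
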